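/- Let k ≥ 1, d ∈ {2, 3}, and n ≥ k(d-1)+2 be integers. There exists a simple k-connected graph of order n and diameter d with exactly ((3d-5)k² + (5-d)k)/2 + C(n-kd+k-2, 2) + ((d-1)k+4-d)(n-kd+k-2) edges; namely, the graph obtained from the sequential join T = K₁ ∨ K_k ∨ ⋯ ∨ K_k ∨ K₁ (with d-1 middle copies of K_k) by adding a clique R on n - (kd-k+2) new vertices and joining every vertex of R to every vertex of the first three consecutive parts T₁ ∪ T₂ ∪ T₃ of T. -/
import Mathlib


/-- A graph is `k`-connected if it has more than `k` vertices and remains connected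
whenever fewer than `k` vertices are deleted. -/
def SimpleGraph.KConnected {V : Type*} [Fintype V] (k : ℕ) (G : SimpleGraph V) : Prop :=
  k < Fintype.card V ∧ ∀ S : Set V, S.ncard < k → (G.induce Sᶜ).Connected

/-- The level of a vertex `v < k*(d-1)+2` in the sequential join
`T = T₁ ∨ T₂ ∨ ⋯ ∨ T_{d+1}` with `T₁ = T_{d+1} = K₁` and `T₂ = ⋯ = T_d = K_k`:
vertex `0` is the vertex of `T₁` (level `0`), vertices `1, …, k*(d-1)` form the middle
copies of `K_k` (levels `1, …, d-1`, `k` vertices each), and vertex `k*(d-1)+1` is the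
vertex of `T_{d+1}` (level `d`). -/
def oreLevel (k d v : ℕ) : ℕ :=
  if v = 0 then 0 else if v ≤ k * (d - 1) then (v - 1) / k + 1 else d

/-- The extremal graph for Ore's theorem when `d ∈ {2, 3}`: the first `k*(d-1)+2` vertices
form the sequential join `T = K₁ ∨ K_k ∨ ⋯ ∨ K_k ∨ K₁` (two distinct vertices of `T` are
adjacent iff their levels differ by at most `1`), the remaining `n - (k*(d-1)+2)` vertices
form a clique `R`, and every vertex of `R` is joined to every vertex of `T₁ ∪ T₂ ∪ T₃`
(the vertices of `T` of levels `0`, `1` and `2`). -/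
def oreExtremalGraph' (k d n : ℕ) : SimpleGraph (Fin n) :=
  SimpleGraph.fromRel fun v w =>
    (v.val < k * (d - 1) + 2 ∧ w.val < k * (d - 1) + 2 ∧
      oreLevel k d v.val ≤ oreLevel k d w.val + 1 ∧
      oreLevel k d w.val ≤ oreLevel k d v.val + 1)
    ∨ (k * (d - 1) + 2 ≤ v.val ∧ k * (d - 1) + 2 ≤ w.val)
    ∨ (k * (d - 1) + 2 ≤ v.val ∧ w.val < k * (d - 1) + 2 ∧ oreLevel k d w.val ≤ 2)

def lv (k d x : ℕ) : ℕ :=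
  if x = 0 then 0 else if x ≤ k then 1 else if x ≤ k * (d - 1) then 2
  else if x = k * (d - 1) + 1 then d else 1

lemma oreLevel_eq_lv {k d : ℕ} (hk : 1 ≤ k) (hd : d = 2 ∨ d = 3) {x : ℕ}
    (hx : x < k * (d - 1) + 2) : oreLevel k d x = lv k d x := by
  rcases hd with rfl | rfl <;> unfold oreLevel lv <;> split_ifs <;>
    first
      | omega
      | (rw [show (x - 1) / k = 0 from Nat.div_eq_of_lt (by omega)]; all_goals omega)
      | (rw [show (x - 1) / k = 1 from Nat.div_eq_of_lt_le (by omega) (by omega)];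
          all_goals omega)

lemma lv_big {k d : ℕ} (hk : 1 ≤ k) (hd : d = 2 ∨ d = 3) {x : ℕ}
    (hx : k * (d - 1) + 2 ≤ x) : lv k d x = 1 := by
  rcases hd with rfl | rfl <;> unfold lv <;> split_ifs <;> omega

lemma oreAdj_iff {k d n : ℕ} (hk : 1 ≤ k) (hd : d = 2 ∨ d = 3) (v w : Fin n) :
    (oreExtremalGraph' k d n).Adj v w ↔
      v ≠ w ∧ lv k d v.val ≤ lv k d w.val + 1 ∧ lv k d w.val ≤ lv k d v.val + 1 := by
  rw [oreExtremalGraph', SimpleGraph.fromRel_adj]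
  refine and_congr_right fun hne => ?_
  by_cases hv : v.val < k * (d - 1) + 2 <;> by_cases hw : w.val < k * (d - 1) + 2
  · rw [← oreLevel_eq_lv hk hd hv, ← oreLevel_eq_lv hk hd hw]
    constructor
    · rintro ((⟨-, -, h1, h2⟩ | ⟨h1, -⟩ | ⟨h1, -⟩) | (⟨-, -, h1, h2⟩ | ⟨h1, -⟩ | ⟨h1, -⟩)) <;>
        omega
    · exact fun h => Or.inl (Or.inl ⟨hv, hw, h⟩)
  · have hw' : k * (d - 1) + 2 ≤ w.val := by omega
    rw [lv_big hk hd hw']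
    constructor
    · rintro ((⟨-, h1, -⟩ | ⟨h1, -⟩ | ⟨h1, -, -⟩) | (⟨h1, -⟩ | ⟨-, h1⟩ | ⟨-, -, h3⟩)) <;>
        first
          | omega
          | (rw [oreLevel_eq_lv hk hd hv] at h3; omega)
    · rintro ⟨h1, h2⟩
      exact Or.inr (Or.inr (Or.inr ⟨hw', hv, by rw [oreLevel_eq_lv hk hd hv]; omega⟩))
  · have hv' : k * (d - 1) + 2 ≤ v.val := by omega
    rw [lv_big hk hd hv']
    constructor
    · rintro ((⟨h1, -⟩ | ⟨-, h1⟩ | ⟨-, -, h3⟩) | (⟨-, h1, -⟩ | ⟨h1, -⟩ | ⟨h1, -, -⟩)) <;>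
        first
          | omega
          | (rw [oreLevel_eq_lv hk hd hw] at h3; omega)
    · rintro ⟨h1, h2⟩
      exact Or.inl (Or.inr (Or.inr ⟨hv', hw, by rw [oreLevel_eq_lv hk hd hw]; omega⟩))
  · have hv' : k * (d - 1) + 2 ≤ v.val := by omega
    have hw' : k * (d - 1) + 2 ≤ w.val := by omega
    rw [lv_big hk hd hv', lv_big hk hd hw']
    constructor
    · intro _; omega
    · exact fun _ => Or.inl (Or.inr (Or.inl ⟨hv', hw'⟩))

lemma lv_one {k d x : ℕ} (h1 : 1 ≤ x) (h2 : x ≤ k) : lv k d x = 1 := by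
  unfold lv; split_ifs <;> omega

lemma lv_cmid {k d : ℕ} (hd : d = 2 ∨ d = 3) {x : ℕ} (h1 : k * (d - 2) + 1 ≤ x)
    (h2 : x ≤ k * (d - 1)) : lv k d x = d - 1 := by
  rcases hd with rfl | rfl <;> unfold lv <;> split_ifs <;> omega

lemma lv_le {k d : ℕ} (hd : d = 2 ∨ d = 3) (x : ℕ) : lv k d x ≤ d := by
  rcases hd with rfl | rfl <;> unfold lv <;> split_ifs <;> omega

lemma card_val_filter {n a b : ℕ} (hb : b ≤ n) :
    ((Finset.univ : Finset (Fin n)).filter (fun x => a ≤ x.val ∧ x.val < b)).card = b - a := by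
  have himg : ((Finset.univ : Finset (Fin n)).filter
      (fun x => a ≤ x.val ∧ x.val < b)).image Fin.val = Finset.Ico a b := by
    ext y
    simp only [Finset.mem_image, Finset.mem_filter, Finset.mem_univ, true_and, Finset.mem_Ico]
    constructor
    · rintro ⟨x, hx, rfl⟩; exact hx
    · rintro ⟨h1, h2⟩; exact ⟨⟨y, by omega⟩, ⟨h1, h2⟩, rfl⟩
  have := Finset.card_image_of_injective
    ((Finset.univ : Finset (Fin n)).filter (fun x => a ≤ x.val ∧ x.val < b)) Fin.val_injective
  rw [himg, Nat.card_Ico] at this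
  omega

lemma exists_not_mem {k n a : ℕ} (S : Set (Fin n)) (hS : S.ncard < k) (h : a ≥ 1) (h2 : a + k ≤ n) :
    ∃ x : Fin n, a ≤ x.val ∧ x.val < a + k ∧ x ∉ S := by
  by_contra hcon
  push_neg at hcon
  have hsub : (((Finset.univ : Finset (Fin n)).filter
      (fun x => a ≤ x.val ∧ x.val < a + k)) : Set (Fin n)) ⊆ S := by
    intro x hx
    simp only [Finset.coe_filter, Set.mem_setOf_eq, Finset.mem_univ, true_and] at hx
    exact hcon x hx.1 hx.2
  have := Set.ncard_le_ncard hsub (Set.toFinite S)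
  rw [Set.ncard_coe_finset, card_val_filter (by omega)] at this
  omega

lemma ore_connected_induce {k d n : ℕ} (hk : 1 ≤ k) (hd : d = 2 ∨ d = 3)
    (hn : k * (d - 1) + 2 ≤ n) (S : Set (Fin n)) (hS : S.ncard < k) :
    ((oreExtremalGraph' k d n).induce Sᶜ).Connected := by
  have hd23 : 2 ≤ d ∧ d ≤ 3 := by omega
  have hm : k ≤ k * (d - 1) ∧ k * (d - 2) + k ≤ k * (d - 1) := by
    rcases hd with rfl | rfl <;> constructor <;> omega
  obtain ⟨b, hb1, hb2, hbS⟩ := exists_not_mem S hS (a := 1) (by omega) (by omega)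
  obtain ⟨c, hc1, hc2, hcS⟩ := exists_not_mem S hS (a := k * (d - 2) + 1) (by omega) (by omega)
  have hlvb : lv k d b.val = 1 := lv_one hb1 (by omega)
  have hlvc : lv k d c.val = d - 1 := lv_cmid hd hc1 (by omega)
  set G := oreExtremalGraph' k d n with hG
  have hcS' : c ∈ Sᶜ := hcS
  have hbS' : b ∈ Sᶜ := hbS
  have key : ∀ u : ↥(Sᶜ), (G.induce Sᶜ).Reachable u ⟨c, hcS'⟩ := by
    intro u
    by_cases heq : u.val = c
    · rw [show u = ⟨c, hcS'⟩ from Subtype.ext heq]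
    by_cases h0 : lv k d u.val.val = 0
    · have hub : (G.induce Sᶜ).Adj u ⟨b, hbS'⟩ := by
        show G.Adj u.val b
        rw [hG, oreAdj_iff hk hd]
        refine ⟨fun h => by rw [h, hlvb] at h0; omega, by omega⟩
      by_cases hbc : b = c
      · subst hbc; exact hub.reachable
      · have hbcadj : (G.induce Sᶜ).Adj ⟨b, hbS'⟩ ⟨c, hcS'⟩ := by
          show G.Adj b c
          rw [hG, oreAdj_iff hk hd]
          exact ⟨hbc, by omega⟩
        exact hub.reachable.trans hbcadj.reachable
    · have huc : (G.induce Sᶜ).Adj u ⟨c, hcS'⟩ := by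
        show G.Adj u.val c
        rw [hG, oreAdj_iff hk hd]
        have h1 : lv k d u.val.val ≤ d := lv_le hd _
        exact ⟨fun h => heq (by rw [h]), by omega⟩
      exact huc.reachable
  rw [SimpleGraph.connected_iff]
  exact ⟨fun x y => (key x).trans (key y).symm, ⟨⟨c, hcS'⟩⟩⟩

lemma lv_zero {k d : ℕ} : lv k d 0 = 0 := by unfold lv; simp

lemma lv_last {k d : ℕ} (hk : 1 ≤ k) (hd : d = 2 ∨ d = 3) : lv k d (k * (d - 1) + 1) = d := by
  rcases hd with rfl | rfl <;> unfold lv <;> split_ifs <;> first | exact ‹False› | omega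

lemma ore_walk_le {k d n : ℕ} (hk : 1 ≤ k) (hd : d = 2 ∨ d = 3) {u v : Fin n}
    (p : (oreExtremalGraph' k d n).Walk u v) :
    lv k d v.val ≤ lv k d u.val + p.length := by
  induction p with
  | nil => simp
  | cons h p ih =>
    rw [oreAdj_iff hk hd] at h
    simp only [SimpleGraph.Walk.length_cons]
    omega

lemma ore_dist_le {k d n : ℕ} (hk : 1 ≤ k) (hd : d = 2 ∨ d = 3)
    (hn : k * (d - 1) + 2 ≤ n) (hconn : (oreExtremalGraph' k d n).Connected) (u v : Fin n) :
    (oreExtremalGraph' k d n).dist u v ≤ d := by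
  have hd23 : 2 ≤ d ∧ d ≤ 3 := by omega
  have hm : k ≤ k * (d - 1) ∧ k * (d - 2) + 1 ≤ k * (d - 1) := by
    rcases hd with rfl | rfl <;> constructor <;> omega
  set G := oreExtremalGraph' k d n with hG
  set b : Fin n := ⟨1, by omega⟩ with hb
  set c : Fin n := ⟨k * (d - 2) + 1, by omega⟩ with hc
  have hbval : b.val = 1 := rfl
  have hcval : c.val = k * (d - 2) + 1 := rfl
  have hlvb : lv k d b.val = 1 := by rw [hbval]; exact lv_one le_rfl hk
  have hlvc : lv k d c.val = d - 1 := by rw [hcval]; exact lv_cmid hd le_rfl (by omega)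
  -- distance to b is ≤ 1 for low vertices
  have hdb : ∀ x : Fin n, lv k d x.val ≤ 2 → G.dist x b ≤ 1 := by
    intro x hx
    by_cases hxb : x = b
    · rw [hxb, SimpleGraph.dist_self]; omega
    · refine le_of_eq (SimpleGraph.dist_eq_one_iff_adj.mpr ?_)
      rw [hG, oreAdj_iff hk hd]
      exact ⟨hxb, by omega⟩
  have hdc : ∀ x : Fin n, 1 ≤ lv k d x.val → G.dist x c ≤ 1 := by
    intro x hx
    by_cases hxc : x = c
    · rw [hxc, SimpleGraph.dist_self]; omega
    · refine le_of_eq (SimpleGraph.dist_eq_one_iff_adj.mpr ?_)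
      rw [hG, oreAdj_iff hk hd]
      have := lv_le hd (k := k) x.val
      exact ⟨hxc, by omega⟩
  have hbc : G.dist b c ≤ 1 := hdc b (by omega)
  have hlow : ∀ x : Fin n, lv k d x.val = 0 ∨ 1 ≤ lv k d x.val := by omega
  have hdlow : ∀ x : Fin n, lv k d x.val ≤ 2 ∨ d = 3 := by
    intro x
    have := lv_le hd (k := k) x.val
    omega
  -- main case analysis
  rcases le_or_gt (lv k d u.val) 2 with hu | hu <;>
    rcases le_or_gt (lv k d v.val) 2 with hv | hv
  · calc G.dist u v ≤ G.dist u b + G.dist b v := hconn.dist_triangle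
      _ ≤ 1 + 1 := by
          have h1 := hdb u hu
          have h2 : G.dist b v ≤ 1 := by rw [SimpleGraph.dist_comm]; exact hdb v hv
          omega
      _ ≤ d := by omega
  · -- lv v = 3, so d = 3 and lv v ≥ 1
    calc G.dist u v ≤ G.dist u b + G.dist b v := hconn.dist_triangle
      _ ≤ 1 + (G.dist b c + G.dist c v) := by
          have h1 := hdb u hu
          have h2 := hconn.dist_triangle (u := b) (v := c) (w := v)
          omega
      _ ≤ 1 + (1 + 1) := by
          have h3 : G.dist c v ≤ 1 := by rw [SimpleGraph.dist_comm]; exact hdc v (by omega)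
          omega
      _ ≤ d := by
          rcases hdlow v with h | h
          · omega
          · omega
  · calc G.dist u v ≤ G.dist u c + G.dist c v := hconn.dist_triangle
      _ ≤ 1 + (G.dist c b + G.dist b v) := by
          have h1 := hdc u (by omega)
          have h2 := hconn.dist_triangle (u := c) (v := b) (w := v)
          omega
      _ ≤ 1 + (1 + 1) := by
          have h2 : G.dist c b ≤ 1 := hdb c (by omega)
          have h3 : G.dist b v ≤ 1 := by rw [SimpleGraph.dist_comm]; exact hdb v hv
          omega
      _ ≤ d := by
          rcases hdlow u with h | h
          · omega
          · omega
  · calc G.dist u v ≤ G.dist u c + G.dist c v := hconn.dist_triangle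
      _ ≤ 1 + 1 := by
          have h1 := hdc u (by omega)
          have h3 : G.dist c v ≤ 1 := by rw [SimpleGraph.dist_comm]; exact hdc v (by omega)
          omega
      _ ≤ d := by omega

lemma ore_connected {k d n : ℕ} (hk : 1 ≤ k) (hd : d = 2 ∨ d = 3)
    (hn : k * (d - 1) + 2 ≤ n) : (oreExtremalGraph' k d n).Connected := by
  have hd23 : 2 ≤ d ∧ d ≤ 3 := by omega
  have hm : k ≤ k * (d - 1) ∧ k * (d - 2) + 1 ≤ k * (d - 1) := by
    rcases hd with rfl | rfl <;> constructor <;> omega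
  set G := oreExtremalGraph' k d n with hG
  set b : Fin n := ⟨1, by omega⟩ with hb
  set c : Fin n := ⟨k * (d - 2) + 1, by omega⟩ with hc
  have hbval : b.val = 1 := rfl
  have hcval : c.val = k * (d - 2) + 1 := rfl
  have hlvb : lv k d b.val = 1 := by rw [hbval]; exact lv_one le_rfl hk
  have hlvc : lv k d c.val = d - 1 := by rw [hcval]; exact lv_cmid hd le_rfl (by omega)
  have key : ∀ u : Fin n, G.Reachable u c := by
    intro u
    by_cases heq : u = c
    · rw [heq]
    by_cases h0 : lv k d u.val = 0
    · have hub : G.Adj u b := by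
        rw [hG, oreAdj_iff hk hd]
        refine ⟨fun h => by rw [h, hlvb] at h0; omega, by omega⟩
      by_cases hbc : b = c
      · rw [← hbc]; exact hub.reachable
      · have hbcadj : G.Adj b c := by
          rw [hG, oreAdj_iff hk hd]
          exact ⟨hbc, by omega⟩
        exact hub.reachable.trans hbcadj.reachable
    · have huc : G.Adj u c := by
        rw [hG, oreAdj_iff hk hd]
        have h1 : lv k d u.val ≤ d := lv_le hd _
        exact ⟨heq, by omega⟩
      exact huc.reachable
  rw [SimpleGraph.connected_iff]
  exact ⟨fun x y => (key x).trans (key y).symm, ⟨c⟩⟩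

lemma ore_diam {k d n : ℕ} (hk : 1 ≤ k) (hd : d = 2 ∨ d = 3)
    (hn : k * (d - 1) + 2 ≤ n) : (oreExtremalGraph' k d n).diam = d := by
  have hd23 : 2 ≤ d ∧ d ≤ 3 := by omega
  set G := oreExtremalGraph' k d n with hG
  have hconn : G.Connected := ore_connected hk hd hn
  haveI : Nonempty (Fin n) := ⟨⟨0, by omega⟩⟩
  have hub : ∀ u v : Fin n, G.dist u v ≤ d := fun u v => ore_dist_le hk hd hn hconn u v
  have hediam : G.ediam ≤ (d : ℕ∞) := by
    apply SimpleGraph.ediam_le_of_edist_le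
    intro u v
    obtain ⟨p, hp⟩ := (hconn u v).exists_walk_length_eq_dist
    calc G.edist u v ≤ (p.length : ℕ∞) := SimpleGraph.edist_le p
      _ ≤ (d : ℕ∞) := by
          rw [hp]
          exact_mod_cast Nat.cast_le.mpr (hub u v)
  have hne : G.ediam ≠ ⊤ := by
    intro h
    rw [h] at hediam
    simp at hediam
  apply le_antisymm
  · obtain ⟨u, v, huv⟩ := SimpleGraph.exists_dist_eq_diam (G := G)
    rw [← huv]
    exact hub u v
  · have h0 : d ≤ G.dist ⟨0, by omega⟩ ⟨k * (d - 1) + 1, by omega⟩ := by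
      obtain ⟨p, hp⟩ := (hconn ⟨0, by omega⟩ ⟨k * (d - 1) + 1, by omega⟩).exists_walk_length_eq_dist
      have hw := ore_walk_le hk hd p
      have h1 : lv k d ((⟨0, by omega⟩ : Fin n)).val = 0 := lv_zero
      have h2 : lv k d ((⟨k * (d - 1) + 1, by omega⟩ : Fin n)).val = d := lv_last hk hd
      omega
    exact le_trans h0 (SimpleGraph.dist_le_diam hne)

lemma card_val_filter_two {n a b c e : ℕ} (hb : b ≤ n) (hbc : b ≤ c) (he : e ≤ n)
    [DecidablePred fun x : Fin n => (a ≤ x.val ∧ x.val < b) ∨ (c ≤ x.val ∧ x.val < e)] :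
    ((Finset.univ : Finset (Fin n)).filter
      (fun x => (a ≤ x.val ∧ x.val < b) ∨ (c ≤ x.val ∧ x.val < e))).card
      = (b - a) + (e - c) := by
  classical
  have hu : (Finset.univ : Finset (Fin n)).filter
      (fun x => (a ≤ x.val ∧ x.val < b) ∨ (c ≤ x.val ∧ x.val < e))
      = ((Finset.univ : Finset (Fin n)).filter (fun x => a ≤ x.val ∧ x.val < b))
        ∪ ((Finset.univ : Finset (Fin n)).filter (fun x => c ≤ x.val ∧ x.val < e)) := by
    ext x
    simp only [Finset.mem_filter, Finset.mem_union, Finset.mem_univ, true_and]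
  rw [hu, Finset.card_union_of_disjoint, card_val_filter hb, card_val_filter he]
  rw [Finset.disjoint_left]
  intro x hx hy
  simp only [Finset.mem_filter] at hx hy
  omega

lemma degree_eq_of_iff {n : ℕ} (G : SimpleGraph (Fin n)) [DecidableRel G.Adj] (v : Fin n)
    (P : Fin n → Prop) [DecidablePred P] (hiff : ∀ w, G.Adj v w ↔ w ≠ v ∧ P w) (hv : P v) :
    G.degree v + 1 = (Finset.univ.filter (fun w => P w)).card := by
  have h1 : (Finset.univ.filter (fun w => G.Adj v w)) =
      (Finset.univ.filter (fun w => P w)).erase v := by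
    ext w
    simp only [Finset.mem_filter, Finset.mem_univ, true_and, Finset.mem_erase, hiff w]
  rw [← SimpleGraph.neighborFinset_eq_filter] at h1
  rw [SimpleGraph.degree, h1, Finset.card_erase_add_one]
  simp only [Finset.mem_filter, Finset.mem_univ, true_and]
  exact hv

set_option maxHeartbeats 1000000 in
lemma ore_edges_three {k r n : ℕ} (hk : 1 ≤ k) (hn : n = 2 * k + 2 + r) :
    2 * (oreExtremalGraph' k 3 n).edgeSet.ncard
      = 2 * k + r + (2 * k + r) * (2 * k + r) := by
  classical
  set G := oreExtremalGraph' k 3 n with hG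
  haveI : DecidableRel G.Adj := Classical.decRel _
  have hd : (3 : ℕ) = 2 ∨ (3 : ℕ) = 3 := Or.inr rfl
  -- levels for d = 3
  have hlv : ∀ x : ℕ, lv k 3 x = if x = 0 then 0 else if x ≤ k then 1
      else if x ≤ k * 2 then 2 else if x = k * 2 + 1 then 3 else 1 := by
    intro x; unfold lv; norm_num
  -- degrees
  have hdeg : ∀ v : Fin n, G.degree v =
      (if v.val = 0 then k + r else if v.val = 2 * k + 1 then k else 2 * k + r) := by
    intro v
    by_cases hv0 : v.val = 0
    · have h := degree_eq_of_iff G v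
        (fun w => (0 ≤ w.val ∧ w.val < k + 1) ∨ (2 * k + 2 ≤ w.val ∧ w.val < n))
        (fun w => by
          rw [hG, oreAdj_iff hk hd]
          have h1 := hlv v.val
          have h2 := hlv w.val
          have h3 := w.isLt
          constructor
          · rintro ⟨hne, hc⟩
            refine ⟨hne.symm, ?_⟩
            split_ifs at h1 h2 <;> omega
          · rintro ⟨hne, hc⟩
            refine ⟨hne.symm, ?_⟩
            split_ifs at h1 h2 <;> omega)
        (by omega)
      rw [card_val_filter_two (by omega) (by omega) (by omega)] at h
      rw [if_pos hv0]
      omega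
    · by_cases hv1 : v.val = 2 * k + 1
      · have h := degree_eq_of_iff G v
          (fun w => (k + 1 ≤ w.val ∧ w.val < 2 * k + 2) ∨ (n ≤ w.val ∧ w.val < n))
          (fun w => by
            rw [hG, oreAdj_iff hk hd]
            have h1 := hlv v.val
            have h2 := hlv w.val
            have h3 := w.isLt
            constructor
            · rintro ⟨hne, hc⟩
              refine ⟨hne.symm, ?_⟩
              split_ifs at h1 h2 <;> omega
            · rintro ⟨hne, hc⟩
              refine ⟨hne.symm, ?_⟩
              split_ifs at h1 h2 <;> omega)
          (by omega)
        rw [card_val_filter_two (by omega) (by omega) (by omega)] at h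
        rw [if_neg hv0, if_pos hv1]
        omega
      · -- middle or clique vertex: lv v = 1 or 2
        have hv12 : lv k 3 v.val = 1 ∨ lv k 3 v.val = 2 := by
          have h0 := hlv v.val
          have h4 := v.isLt
          split_ifs at h0 <;> omega
        rw [if_neg hv0, if_neg hv1]
        rcases hv12 with hcase | hcase
        · have h := degree_eq_of_iff G v
            (fun w => (0 ≤ w.val ∧ w.val < 2 * k + 1) ∨ (2 * k + 2 ≤ w.val ∧ w.val < n))
            (fun w => by
              rw [hG, oreAdj_iff hk hd]
              have h2 := hlv v.val
              have h2' := hlv w.val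
              have h3 := w.isLt
              have h4 := v.isLt
              rw [hcase] at h2
              constructor
              · rintro ⟨hne, hc⟩
                refine ⟨hne.symm, ?_⟩
                split_ifs at h2 h2' <;> omega
              · rintro ⟨hne, hc⟩
                refine ⟨hne.symm, ?_⟩
                split_ifs at h2 h2' <;> omega)
            (by have h4 := v.isLt; omega)
          rw [card_val_filter_two (by omega) (by omega) (by omega)] at h
          omega
        · have h := degree_eq_of_iff G v
            (fun w => (1 ≤ w.val ∧ w.val < 2 * k + 2) ∨ (2 * k + 2 ≤ w.val ∧ w.val < n))
            (fun w => by
              rw [hG, oreAdj_iff hk hd]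
              have h2 := hlv v.val
              have h2' := hlv w.val
              have h3 := w.isLt
              have h4 := v.isLt
              rw [hcase] at h2
              constructor
              · rintro ⟨hne, hc⟩
                refine ⟨hne.symm, ?_⟩
                split_ifs at h2 h2' <;> omega
              · rintro ⟨hne, hc⟩
                refine ⟨hne.symm, ?_⟩
                split_ifs at h2 h2' <;> omega)
            (by omega)
          rw [card_val_filter_two (by omega) (by omega) (by omega)] at h
          omega
  -- sum of degrees
  have hsum : ∑ v : Fin n, G.degree v
      = 2 * k + r + (2 * k + r) * (2 * k + r) := by
    have : ∀ v : Fin n, G.degree v = (fun x : ℕ =>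
        if x = 0 then k + r else if x = 2 * k + 1 then k else 2 * k + r) v.val := hdeg
    calc ∑ v : Fin n, G.degree v
        = ∑ v : Fin n, (fun x : ℕ =>
            if x = 0 then k + r else if x = 2 * k + 1 then k else 2 * k + r) v.val :=
          Finset.sum_congr rfl (fun v _ => this v)
      _ = ∑ x ∈ Finset.range n, (if x = 0 then k + r
            else if x = 2 * k + 1 then k else 2 * k + r) :=
          Fin.sum_univ_eq_sum_range
            (fun x : ℕ => if x = 0 then k + r else if x = 2 * k + 1 then k else 2 * k + r) n
      _ = 2 * k + r + (2 * k + r) * (2 * k + r) := by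
          have hm0 : 0 ∈ Finset.range n := by simp only [Finset.mem_range]; omega
          have hm1 : 2 * k + 1 ∈ (Finset.range n).erase 0 := by
            simp only [Finset.mem_erase, Finset.mem_range]; omega
          rw [← Finset.add_sum_erase _ _ hm0, ← Finset.add_sum_erase _ _ hm1]
          rw [Finset.sum_const_nat (m := 2 * k + r) (fun x hx => by
            simp only [Finset.mem_erase, Finset.mem_range] at hx
            split_ifs <;> omega)]
          have hc2 : (((Finset.range n).erase 0).erase (2 * k + 1)).card = 2 * k + r := by
            rw [Finset.card_erase_of_mem hm1, Finset.card_erase_of_mem hm0, Finset.card_range]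
            omega
          rw [hc2, if_pos rfl, if_neg (by omega), if_pos rfl]
          omega
  have hcard : G.edgeSet.ncard = G.edgeFinset.card := by
    rw [← SimpleGraph.coe_edgeFinset, Set.ncard_coe_finset]
  rw [hcard, ← SimpleGraph.sum_degrees_eq_twice_card_edges, hsum]

set_option maxHeartbeats 1000000 in
lemma ore_edges_two {k r n : ℕ} (hk : 1 ≤ k) (hn : n = k + 2 + r) :
    2 * (oreExtremalGraph' k 2 n).edgeSet.ncard
      = 2 * (k + r) + (k + r) * (k + 1 + r) := by
  classical
  set G := oreExtremalGraph' k 2 n with hG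
  haveI : DecidableRel G.Adj := Classical.decRel _
  have hd : (2 : ℕ) = 2 ∨ (2 : ℕ) = 3 := Or.inl rfl
  have hlv : ∀ x : ℕ, lv k 2 x = if x = 0 then 0 else if x ≤ k then 1
      else if x = k + 1 then 2 else 1 := by
    intro x; unfold lv; split_ifs <;> first | rfl | omega
  have hdeg : ∀ v : Fin n, G.degree v =
      (if v.val = 0 then k + r else if v.val = k + 1 then k + r else k + 1 + r) := by
    intro v
    by_cases hv0 : v.val = 0
    · have h := degree_eq_of_iff G v
        (fun w => (0 ≤ w.val ∧ w.val < k + 1) ∨ (k + 2 ≤ w.val ∧ w.val < n))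
        (fun w => by
          rw [hG, oreAdj_iff hk hd]
          have h1 := hlv v.val
          have h2 := hlv w.val
          have h3 := w.isLt
          constructor
          · rintro ⟨hne, hc⟩
            refine ⟨hne.symm, ?_⟩
            split_ifs at h1 h2 <;> omega
          · rintro ⟨hne, hc⟩
            refine ⟨hne.symm, ?_⟩
            split_ifs at h1 h2 <;> omega)
        (by omega)
      rw [card_val_filter_two (by omega) (by omega) (by omega)] at h
      rw [if_pos hv0]
      omega
    · by_cases hv1 : v.val = k + 1
      · have h := degree_eq_of_iff G v
          (fun w => (1 ≤ w.val ∧ w.val < n) ∨ (n ≤ w.val ∧ w.val < n))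
          (fun w => by
            rw [hG, oreAdj_iff hk hd]
            have h1 := hlv v.val
            have h2 := hlv w.val
            have h3 := w.isLt
            constructor
            · rintro ⟨hne, hc⟩
              refine ⟨hne.symm, ?_⟩
              split_ifs at h1 h2 <;> omega
            · rintro ⟨hne, hc⟩
              refine ⟨hne.symm, ?_⟩
              split_ifs at h1 h2 <;> omega)
          (by omega)
        rw [card_val_filter_two (by omega) (by omega) (by omega)] at h
        rw [if_neg hv0, if_pos hv1]
        omega
      · have h := degree_eq_of_iff G v
          (fun w => (0 ≤ w.val ∧ w.val < n) ∨ (n ≤ w.val ∧ w.val < n))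
          (fun w => by
            rw [hG, oreAdj_iff hk hd]
            have h1 := hlv v.val
            have h2 := hlv w.val
            have h3 := w.isLt
            have h4 := v.isLt
            constructor
            · rintro ⟨hne, hc⟩
              refine ⟨hne.symm, ?_⟩
              split_ifs at h1 h2 <;> omega
            · rintro ⟨hne, hc⟩
              refine ⟨hne.symm, ?_⟩
              split_ifs at h1 h2 <;> omega)
          (by omega)
        rw [card_val_filter_two (by omega) (by omega) (by omega)] at h
        rw [if_neg hv0, if_neg hv1]
        omega
  have hsum : ∑ v : Fin n, G.degree v = 2 * (k + r) + (k + r) * (k + 1 + r) := by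
    calc ∑ v : Fin n, G.degree v
        = ∑ v : Fin n, (fun x : ℕ =>
            if x = 0 then k + r else if x = k + 1 then k + r else k + 1 + r) v.val :=
          Finset.sum_congr rfl (fun v _ => hdeg v)
      _ = ∑ x ∈ Finset.range n, (if x = 0 then k + r
            else if x = k + 1 then k + r else k + 1 + r) :=
          Fin.sum_univ_eq_sum_range
            (fun x : ℕ => if x = 0 then k + r else if x = k + 1 then k + r else k + 1 + r) n
      _ = 2 * (k + r) + (k + r) * (k + 1 + r) := by
          have hm0 : 0 ∈ Finset.range n := by simp only [Finset.mem_range]; omega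
          have hm1 : k + 1 ∈ (Finset.range n).erase 0 := by
            simp only [Finset.mem_erase, Finset.mem_range]; omega
          rw [← Finset.add_sum_erase _ _ hm0, ← Finset.add_sum_erase _ _ hm1]
          rw [Finset.sum_const_nat (m := k + 1 + r) (fun x hx => by
            simp only [Finset.mem_erase, Finset.mem_range] at hx
            split_ifs <;> omega)]
          have hc2 : (((Finset.range n).erase 0).erase (k + 1)).card = k + r := by
            rw [Finset.card_erase_of_mem hm1, Finset.card_erase_of_mem hm0, Finset.card_range]
            omega
          rw [hc2, if_pos rfl, if_neg (by omega), if_pos rfl]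
          omega
  have hcard : G.edgeSet.ncard = G.edgeFinset.card := by
    rw [← SimpleGraph.coe_edgeFinset, Set.ncard_coe_finset]
  rw [hcard, ← SimpleGraph.sum_degrees_eq_twice_card_edges, hsum]

/-- Ore's theorem, sharpness for `d ∈ {2, 3}`: there is a simple `k`-connected graph of
order `n` and diameter `d` with exactly
`((3d-5)k² + (5-d)k)/2 + C(n-kd+k-2, 2) + ((d-1)k+4-d)(n-kd+k-2)` edges,
namely the graph obtained from the sequential join `T` by adding a clique `R` on
`n - (k*(d-1)+2)` new vertices, each joined to all of `T₁ ∪ T₂ ∪ T₃`. -/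
theorem oreExtremalGraph'_isExtremal (k d n : ℕ) (hk : 1 ≤ k) (hd : d = 2 ∨ d = 3)
    (hn : k * (d - 1) + 2 ≤ n) :
    (oreExtremalGraph' k d n).KConnected k ∧
    Fintype.card (Fin n) = n ∧
    (oreExtremalGraph' k d n).diam = d ∧
    ((oreExtremalGraph' k d n).edgeSet.ncard : ℤ) =
      ((3 * (d : ℤ) - 5) * (k : ℤ) ^ 2 + (5 - (d : ℤ)) * (k : ℤ)) / 2
        + ((n : ℤ) - k * d + k - 2) * (((n : ℤ) - k * d + k - 2) - 1) / 2
        + (((d : ℤ) - 1) * k + 4 - (d : ℤ)) * ((n : ℤ) - k * d + k - 2) := by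
  refine ⟨⟨?_, fun S hS => ore_connected_induce hk hd hn S hS⟩, Fintype.card_fin n,
    ore_diam hk hd hn, ?_⟩
  · rw [Fintype.card_fin]
    rcases hd with rfl | rfl <;> omega
  · rcases hd with rfl | rfl
    · -- d = 2
      obtain ⟨r, rfl⟩ : ∃ r, n = k + 2 + r := ⟨n - (k + 2), by omega⟩
      have hE := ore_edges_two hk (rfl : k + 2 + r = k + 2 + r)
      have hE' : (2 : ℤ) * ((oreExtremalGraph' k 2 (k + 2 + r)).edgeSet.ncard : ℤ)
          = 2 * ((k : ℤ) + r) + ((k : ℤ) + r) * ((k : ℤ) + 1 + r) := by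
        exact_mod_cast congrArg (fun x : ℕ => (x : ℤ)) hE
      have hX : ((k + 2 + r : ℕ) : ℤ) - (k : ℤ) * (2 : ℕ) + (k : ℤ) - 2 = (r : ℤ) := by
        push_cast; ring
      rw [hX]
      push_cast
      obtain ⟨c0, hc0⟩ : Even ((k : ℤ) * ((k : ℤ) + 1)) := Int.even_mul_succ_self (k : ℤ)
      obtain ⟨c1, hc1⟩ : Even (((r : ℤ) - 1) * (((r : ℤ) - 1) + 1)) :=
        Int.even_mul_succ_self ((r : ℤ) - 1)
      have e0 : 1 * (k : ℤ) ^ 2 + 3 * (k : ℤ) = 2 * (c0 + k) := by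
        linear_combination hc0
      have e1 : (r : ℤ) * ((r : ℤ) - 1) = 2 * c1 := by linear_combination hc1
      rw [e0, e1, Int.mul_ediv_cancel_left _ two_ne_zero, Int.mul_ediv_cancel_left _ two_ne_zero]
      push_cast at hE' ⊢
      linarith [hE', hc0, hc1]
    · -- d = 3
      obtain ⟨r, rfl⟩ : ∃ r, n = 2 * k + 2 + r := ⟨n - (2 * k + 2), by omega⟩
      have hE := ore_edges_three hk (rfl : 2 * k + 2 + r = 2 * k + 2 + r)
      have hE' : (2 : ℤ) * ((oreExtremalGraph' k 3 (2 * k + 2 + r)).edgeSet.ncard : ℤ)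
          = 2 * (k : ℤ) + r + (2 * (k : ℤ) + r) * (2 * (k : ℤ) + r) := by
        exact_mod_cast congrArg (fun x : ℕ => (x : ℤ)) hE
      have hX : ((2 * k + 2 + r : ℕ) : ℤ) - (k : ℤ) * (3 : ℕ) + (k : ℤ) - 2 = (r : ℤ) := by
        push_cast; ring
      rw [hX]
      push_cast
      obtain ⟨c0, hc0⟩ : Even ((2 * (k : ℤ) ^ 2 + k) * ((2 * (k : ℤ) ^ 2 + k) + 1)) :=
        Int.even_mul_succ_self _
      obtain ⟨c1, hc1⟩ : Even (((r : ℤ) - 1) * (((r : ℤ) - 1) + 1)) :=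
        Int.even_mul_succ_self ((r : ℤ) - 1)
      have e0 : 4 * (k : ℤ) ^ 2 + 2 * (k : ℤ) = 2 * (2 * (k : ℤ) ^ 2 + k) := by ring
      have e1 : (r : ℤ) * ((r : ℤ) - 1) = 2 * c1 := by linear_combination hc1
      rw [e0, e1, Int.mul_ediv_cancel_left _ two_ne_zero, Int.mul_ediv_cancel_left _ two_ne_zero]
      push_cast at hE' ⊢
      nlinarith [hE', hc1]
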